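/- arXiv:2308.11625 — 2 statements merged into one kernel-verified Lean document; each statement's English description precedes it below -/
import Mathlib

section
/- Let W be a 2n×2n symplectic matrix such that (1/2)(W + W^{-1}) = [[K, 0],[0, K^T]] for some n×n real matrix K. Then every eigenvalue of W lies on the unit circle in ℂ if and only if every eigenvalue of K lies in the real interval [−1, 1]. -/
open Matrix

/-- membership in spectrum via determinant -/
lemma aux_mem_spec {m : Type*} [Fintype m] [DecidableEq m] (M : Matrix m m ℂ) (z : ℂ) :
    z ∈ spectrum ℂ M ↔ (M - z • 1).det = 0 := by
  rw [spectrum.mem_iff, Matrix.isUnit_iff_isUnit_det, isUnit_iff_ne_zero, not_ne_iff]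
  have h : (algebraMap ℂ (Matrix m m ℂ) z - M) = -(M - z • 1) := by
    rw [Matrix.algebraMap_eq_diagonal]
    simp [Matrix.smul_one_eq_diagonal]
  rw [h, Matrix.det_neg, mul_eq_zero]
  constructor
  · rintro (h' | h')
    · exact absurd h' (pow_ne_zero _ (by norm_num))
    · exact h'
  · exact Or.inr

lemma aux_quad_det {m : Type*} [Fintype m] [DecidableEq m]
    (A D : Matrix m m ℂ) (h : A * A + 1 = A * D + A * D) (z l₁ l₂ : ℂ)
    (hs : l₁ + l₂ = 2 * z) (hp : l₁ * l₂ = 1) :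
    (A - l₁ • 1).det * (A - l₂ • 1).det
      = (2 : ℂ) ^ (Fintype.card m) * (A.det * (D - z • 1).det) := by
  rw [← Matrix.det_mul]
  have key : (A - l₁ • 1) * (A - l₂ • 1) = (2 : ℂ) • (A * (D - z • 1)) := by
    have e1 : (A - l₁ • 1) * (A - l₂ • 1)
        = A * A - l₂ • A - l₁ • A + (l₁ * l₂) • 1 := by
      rw [sub_mul, mul_sub, mul_sub]
      simp only [smul_mul_assoc, mul_smul_comm, one_mul, mul_one, smul_smul]
      rw [mul_comm l₂ l₁]
      abel
    have e2 : (2 : ℂ) • (A * (D - z • 1)) = A * D + A * D - (2 * z) • A := by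
      rw [mul_sub, mul_smul_comm, mul_one, smul_sub, smul_smul, two_smul]
    rw [e1, e2, ← h, hp, ← hs, add_smul]
    simp only [one_smul]
    abel
  rw [key, Matrix.det_smul, Matrix.det_mul]

lemma aux_abs_one (l : ℂ) (t : ℝ) (hge : -1 ≤ t) (hle : t ≤ 1)
    (heq : l ^ 2 - 2 * (t : ℂ) * l + 1 = 0) : ‖l‖ = 1 := by
  have hre : l.re ^ 2 - l.im ^ 2 - 2 * t * l.re + 1 = 0 := by
    have h := congrArg Complex.re heq
    simp [pow_two, Complex.mul_re, Complex.mul_im] at h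
    nlinarith [h]
  have him : 2 * l.re * l.im - 2 * t * l.im = 0 := by
    have h := congrArg Complex.im heq
    simp [pow_two, Complex.mul_re, Complex.mul_im] at h
    nlinarith [h]
  have hsq : l.re ^ 2 + l.im ^ 2 = 1 := by
    have hcase : l.im * (l.re - t) = 0 := by nlinarith [him]
    rcases mul_eq_zero.mp hcase with hb0 | hat
    · have h1 : (l.re - t) ^ 2 = t ^ 2 - 1 := by nlinarith [hre, hb0]
      have h2 : t ^ 2 ≤ 1 := by nlinarith [hge, hle]
      have h3 : (l.re - t) ^ 2 = 0 := le_antisymm (by nlinarith) (sq_nonneg _)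
      nlinarith [h1, h3, hb0]
    · nlinarith [hre, hat]
  rw [Complex.norm_def, Complex.normSq_apply,
    show l.re * l.re + l.im * l.im = l.re ^ 2 + l.im ^ 2 by ring, hsq]
  exact Real.sqrt_one

theorem symplectic_eigenvalue_criterion {n : ℕ}
    (W : Matrix (Fin n ⊕ Fin n) (Fin n ⊕ Fin n) ℝ) (K : Matrix (Fin n) (Fin n) ℝ)
    (hsymp : Wᵀ * fromBlocks (0 : Matrix (Fin n) (Fin n) ℝ) 1 (-1) 0 * W
      = fromBlocks (0 : Matrix (Fin n) (Fin n) ℝ) 1 (-1) 0)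
    (hform : (1 / 2 : ℝ) • (W + W⁻¹) = fromBlocks K 0 0 Kᵀ) :
    (∀ z ∈ spectrum ℂ (W.map (Complex.ofReal ·)), ‖z‖ = 1) ↔
      (∀ z ∈ spectrum ℂ (K.map (Complex.ofReal ·)), z.im = 0 ∧ -1 ≤ z.re ∧ z.re ≤ 1) := by
  classical
  set J : Matrix (Fin n ⊕ Fin n) (Fin n ⊕ Fin n) ℝ := fromBlocks 0 1 (-1) 0 with hJ
  -- J is invertible
  have hmulJ : J * fromBlocks 0 (-1) 1 0 = 1 := by
    rw [hJ, Matrix.fromBlocks_multiply]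
    have h1 : (fromBlocks 1 0 0 1 : Matrix (Fin n ⊕ Fin n) (Fin n ⊕ Fin n) ℝ) = 1 :=
      Matrix.fromBlocks_one
    rw [← h1]
    congr 1 <;> simp
  have hdetJ : J.det ≠ 0 := by
    have h := congrArg Matrix.det hmulJ
    rw [Matrix.det_mul, Matrix.det_one] at h
    exact left_ne_zero_of_mul_eq_one h
  have hdetW : W.det ≠ 0 := by
    intro h0
    have := congrArg Matrix.det hsymp
    rw [Matrix.det_mul, Matrix.det_mul, Matrix.det_transpose, h0] at this
    simp at this
    exact hdetJ this.symm
  have hWu : IsUnit W.det := isUnit_iff_ne_zero.mpr hdetW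
  set D : Matrix (Fin n ⊕ Fin n) (Fin n ⊕ Fin n) ℝ := fromBlocks K 0 0 Kᵀ with hD
  have hsum : W + W⁻¹ = 2 • D := by
    have := congrArg (fun M => (2 : ℝ) • M) hform
    rw [smul_smul] at this
    norm_num at this
    rw [this]
    norm_num [two_smul]
  have h1 : W * W + 1 = W * D + W * D := by
    have : W * (W + W⁻¹) = W * (2 • D) := by rw [hsum]
    rw [mul_add, Matrix.mul_nonsing_inv W hWu, two_smul, mul_add] at this
    exact this
  -- complexify
  set Wc := W.map (Complex.ofReal ·) with hWc
  set Kc := K.map (Complex.ofReal ·) with hKc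
  set Dc := D.map (Complex.ofReal ·) with hDc
  have hmap : ∀ M : Matrix (Fin n ⊕ Fin n) (Fin n ⊕ Fin n) ℝ,
      M.map (Complex.ofReal ·) = Complex.ofRealHom.mapMatrix M := fun _ => rfl
  have hc1 : Wc * Wc + 1 = Wc * Dc + Wc * Dc := by
    have := congrArg (Complex.ofRealHom.mapMatrix :
      Matrix (Fin n ⊕ Fin n) (Fin n ⊕ Fin n) ℝ →+* _) h1
    simp only [_root_.map_add, _root_.map_mul, _root_.map_one,
      RingHom.mapMatrix_apply] at this
    exact this
  have hDcblocks : Dc = fromBlocks Kc 0 0 Kcᵀ := by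
    rw [hDc, hD, Matrix.fromBlocks_map]
    simp [Matrix.transpose_map, hKc]
  have hdetWc : Wc.det ≠ 0 := by
    rw [hWc, hmap, ← RingHom.map_det]
    simpa using hdetW
  -- spectrum of Dc vs Kc
  have hspecD : ∀ z : ℂ, (Dc - z • 1).det = 0 ↔ z ∈ spectrum ℂ Kc := by
    intro z
    rw [aux_mem_spec]
    have hb : Dc - z • 1 = fromBlocks (Kc - z • 1) 0 0 ((Kc - z • 1)ᵀ) := by
      rw [hDcblocks, ← Matrix.fromBlocks_one, Matrix.fromBlocks_smul,
        sub_eq_add_neg, Matrix.fromBlocks_neg, Matrix.fromBlocks_add]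
      simp [sub_eq_add_neg, Matrix.transpose_add, Matrix.transpose_neg,
        Matrix.transpose_smul]
    rw [hb, Matrix.det_fromBlocks_zero₁₂, Matrix.det_transpose, mul_self_eq_zero]
  -- card
  have hcard : Fintype.card (Fin n ⊕ Fin n) = 2 * n := by simp [Fintype.card_sum, two_mul]
  constructor
  · -- forward
    intro hWspec z hz
    obtain ⟨w, hw⟩ := IsAlgClosed.exists_pow_nat_eq (k := ℂ) (z ^ 2 - 1) (n := 2) (by norm_num)
    have hdet0 : (Dc - z • 1).det = 0 := by rw [hspecD]; exact hz
    have hq := aux_quad_det Wc Dc hc1 z (z + w) (z - w) (by ring)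
      (by rw [show (z + w) * (z - w) = z ^ 2 - w ^ 2 by ring, hw]; ring)
    rw [hdet0, mul_zero, mul_zero, mul_eq_zero] at hq
    -- get an eigenvalue lam of Wc with lam^2 - 2 z lam + 1 = 0
    obtain ⟨l, hl, hleq⟩ : ∃ l : ℂ, l ∈ spectrum ℂ Wc ∧ l ^ 2 - 2 * z * l + 1 = 0 := by
      rcases hq with hq | hq
      · exact ⟨z + w, (aux_mem_spec _ _).mpr hq, by linear_combination hw⟩
      · exact ⟨z - w, (aux_mem_spec _ _).mpr hq, by linear_combination hw⟩
    have habs := hWspec l hl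
    have hl0 : l ≠ 0 := by
      intro h; rw [h] at hleq; simp at hleq
    have hconj : (starRingEnd ℂ) l = l⁻¹ := by
      refine eq_inv_of_mul_eq_one_left ?_
      have : (starRingEnd ℂ) l * l = (Complex.normSq l : ℂ) := by
        rw [mul_comm, Complex.mul_conj]
      rw [this, ← Complex.sq_norm, habs]
      norm_num
    have hzval : z = (l.re : ℂ) := by
      have h2 : l + l⁻¹ = 2 * z := by
        field_simp at hleq ⊢
        linear_combination hleq - (2*z*l - l^2 - 1)
      rw [Complex.re_eq_add_conj, hconj, h2]
      ring
    refine ⟨by rw [hzval]; simp, ?_, ?_⟩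
    · rw [hzval]; simp only [Complex.ofReal_re]
      have := Complex.abs_re_le_norm l
      rw [habs] at this
      cases abs_le.mp this with
      | intro h1 h2 => exact h1
    · rw [hzval]; simp only [Complex.ofReal_re]
      have := Complex.abs_re_le_norm l
      rw [habs] at this
      exact (abs_le.mp this).2
  · -- reverse
    intro hKspec l hl
    have hWcu : IsUnit Wc := (Matrix.isUnit_iff_isUnit_det Wc).mpr (isUnit_iff_ne_zero.mpr hdetWc)
    have hl0 : l ≠ 0 := by
      intro h; rw [h] at hl
      exact spectrum.zero_notMem ℂ hWcu hl
    set z : ℂ := (l + l⁻¹) / 2 with hz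
    have hq := aux_quad_det Wc Dc hc1 z l l⁻¹ (by rw [hz]; ring) (mul_inv_cancel₀ hl0)
    have hldet : (Wc - l • 1).det = 0 := (aux_mem_spec _ _).mp hl
    rw [hldet, zero_mul] at hq
    have hdetD : (Dc - z • 1).det = 0 := by
      have h2 : (2 : ℂ) ^ Fintype.card (Fin n ⊕ Fin n) ≠ 0 := pow_ne_zero _ (by norm_num)
      rcases mul_eq_zero.mp hq.symm with h | h
      · exact absurd h h2
      · rcases mul_eq_zero.mp h with h' | h'
        · exact absurd h' hdetWc
        · exact h'
    have hzK := hKspec z ((hspecD z).mp hdetD)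
    obtain ⟨him, hge, hle⟩ := hzK
    -- now show |l| = 1
    have heq : l ^ 2 - 2 * z * l + 1 = 0 := by
      rw [hz]; field_simp; ring
    have hzt : z = (z.re : ℂ) := by
      apply Complex.ext <;> simp [him]
    rw [hzt] at heq
    exact aux_abs_one l z.re hge hle heq
end

section
/- Suppose A: ℝ → M_{2n}(ℝ) is continuous, S is an orthogonal matrix with SJ = JS where the matrix ODE X' = A(s)X satisfies S A(s) S^T = A(s + T/N) for all s, and X is the fundamental solution with X(0) = I satisfying X(s + T/N) = S X(s) S^T X(T/N) for all s. Then for every natural number k, X(kT/N) = S^k (S^T X(T/N))^k. -/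
open Matrix

theorem roberts_factorization {n : ℕ} (T : ℝ) (N : ℕ) (hT : 0 < T) (hN : 0 < N)
    (A : ℝ → Matrix (Fin (2 * n)) (Fin (2 * n)) ℝ) (hA : Continuous A)
    (S J : Matrix (Fin (2 * n)) (Fin (2 * n)) ℝ)
    (hSorth : Sᵀ * S = 1) (hSJ : S * J = J * S)
    (hAsym : ∀ s, S * A s * Sᵀ = A (s + T / N))
    (X : ℝ → Matrix (Fin (2 * n)) (Fin (2 * n)) ℝ)
    (hX0 : X 0 = 1)
    (hXode : ∀ s, ∀ i j, HasDerivAt (fun u => X u i j) ((A s * X s) i j) s)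
    (hXsym : ∀ s, X (s + T / N) = S * X s * Sᵀ * X (T / N)) :
    ∀ k : ℕ, X (k * (T / N)) = S ^ k * (Sᵀ * X (T / N)) ^ k := by
  intro k
  induction k with
  | zero => simpa using hX0
  | succ k ih =>
      have h : ((k + 1 : ℕ) : ℝ) * (T / N) = k * (T / N) + T / N := by
        push_cast; ring
      rw [h, hXsym, ih, ← mul_assoc S, ← pow_succ', pow_succ (Sᵀ * X (T / ↑N)),
        mul_assoc, mul_assoc]
end
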